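/- arXiv:2410.10962 — 5 statements merged into one kernel-verified Lean document; each statement's English description precedes it below -/
import Mathlib

section
/- For any transfer system 𝒪 on a finite group G, the set Sub^𝒪(G) of subgroups H with H → G in 𝒪 has a unique minimal element. -/
/-- A transfer system on a group `G`: a partial order `rel` on subgroups refining the
subgroup relation, closed under conjugation and restriction. -/
structure TransferSystem (G : Type*) [Group G] where
  rel : Subgroup G → Subgroup G → Prop
  le_of_rel : ∀ {K H : Subgroup G}, rel K H → K ≤ H
  refl : ∀ H : Subgroup G, rel H H
  trans : ∀ {J K H : Subgroup G}, rel J K → rel K H → rel J H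
  antisymm : ∀ {K H : Subgroup G}, rel K H → rel H K → K = H
  conj : ∀ (g : G) {K H : Subgroup G}, rel K H →
    rel (K.map (MulAut.conj g).toMonoidHom) (H.map (MulAut.conj g).toMonoidHom)
  restrict : ∀ {K H L : Subgroup G}, rel K H → L ≤ H → rel (K ⊓ L) L

/-- Conjugate subgroup `gKg⁻¹`. -/
def conjSub {G : Type*} [Group G] (g : G) (K : Subgroup G) : Subgroup G :=
  K.map (MulAut.conj g).toMonoidHom

/-- `H_𝒪(J)`: the minimal subgroup containing `J` which transfers to `G` (the top subgroup). -/
noncomputable def HO {G : Type*} [Group G] (O : TransferSystem G) (J : Subgroup G) : Subgroup G :=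
  sInf {H : Subgroup G | O.rel H ⊤ ∧ J ≤ H}

/-- `J ∈ [H]^𝒪`: the inseparability class of `H`, i.e. `H_𝒪(J)` is conjugate to `H`. -/
def inClass {G : Type*} [Group G] (O : TransferSystem G) (H J : Subgroup G) : Prop :=
  ∃ g : G, conjSub g (HO O J) = H

/-- `J` and `K` are 𝒪-inseparable: `H_𝒪(J)` and `H_𝒪(K)` are conjugate. -/
def TSInseparable {G : Type*} [Group G] (O : TransferSystem G) (J K : Subgroup G) : Prop :=
  ∃ g : G, conjSub g (HO O J) = HO O K

/-! Restricting `H → G` along `K ≤ G` gives `H ⊓ K → K`, so for `K → G` transitivity yields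
`H ⊓ K → G`. Thus `Sub^𝒪(G)` is closed under intersections; being finite and containing `G`,
its intersection lies in it and is its least element. -/

namespace TransferSystem

variable {G : Type*} [Group G] (O : TransferSystem G)

theorem rel_top_inf {H K : Subgroup G} (hH : O.rel H ⊤) (hK : O.rel K ⊤) : O.rel (H ⊓ K) ⊤ :=
  O.trans (O.restrict hH le_top) hK

theorem infClosed_rel_top : InfClosed {H : Subgroup G | O.rel H ⊤} :=
  fun _ hH _ hK => O.rel_top_inf hH hK

theorem isLeast_sInf_rel_top [Finite G] :
    IsLeast {H : Subgroup G | O.rel H ⊤} (sInf {H : Subgroup G | O.rel H ⊤}) :=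
  ⟨O.infClosed_rel_top.sInf_mem_of_nonempty (Set.toFinite _) ⟨⊤, O.refl ⊤⟩ subset_rfl,
    fun _ hH => sInf_le hH⟩

end TransferSystem

/-- `Sub^𝒪(G)` has a unique minimal element. -/
theorem exists_unique_minimal_transferring_subgroup {G : Type*} [Group G] [Finite G]
    (O : TransferSystem G) :
    ∃! N : Subgroup G, O.rel N ⊤ ∧ ∀ H : Subgroup G, O.rel H ⊤ → N ≤ H := by
  have hleast := O.isLeast_sInf_rel_top
  exact ⟨_, hleast, fun _ hN => IsLeast.unique ⟨hN.1, hN.2⟩ hleast⟩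
end

section
/- For any subgroup J of G and any L ∈ Sub^𝒪(G), the J-fixed points and the H_𝒪(J)-fixed points of the G-set G/L coincide: (G/L)^J = (G/L)^{H_𝒪(J)}. -/
lemma mem_fixedPoints_iff_le_conjSub {G : Type*} [Group G] (K L : Subgroup G) (g : G) :
    ((g : G ⧸ L) ∈ MulAction.fixedPoints K (G ⧸ L)) ↔ K ≤ conjSub g L := by
  simp only [MulAction.mem_fixedPoints]
  constructor
  · intro h k hk
    have := h ⟨k, hk⟩
    have h2 : ((k * g : G) : G ⧸ L) = (g : G ⧸ L) := this
    rw [QuotientGroup.eq] at h2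
    refine ⟨g⁻¹ * k * g, ?_, ?_⟩
    · have h3 := L.inv_mem h2
      simpa [mul_assoc] using h3
    · simp only [MulEquiv.coe_toMonoidHom, MulAut.conj_apply]
      group
  · intro h k
    obtain ⟨k, hk⟩ := k
    obtain ⟨l, hl, hlk⟩ := h hk
    show ((k * g : G) : G ⧸ L) = (g : G ⧸ L)
    rw [QuotientGroup.eq]
    simp only [MulEquiv.coe_toMonoidHom, MulAut.conj_apply] at hlk
    have : (k * g)⁻¹ * g = l⁻¹ := by rw [← hlk]; group
    rw [this]
    exact L.inv_mem hl

/-- For `L ∈ Sub^𝒪(G)`, the `J`-fixed points of the coset space coincide with the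
`H_𝒪(J)`-fixed points. -/
theorem fixedPoints_eq_fixedPoints_HO {G : Type*} [Group G] [Finite G]
    (O : TransferSystem G) (J L : Subgroup G) (hL : O.rel L ⊤) :
    MulAction.fixedPoints J (G ⧸ L) = MulAction.fixedPoints (HO O J) (G ⧸ L) := by
  have hJle : J ≤ HO O J := le_sInf fun H hH => hH.2
  ext x
  induction x using QuotientGroup.induction_on with
  | H g =>
    show (↑g ∈ MulAction.fixedPoints J (G ⧸ L)) ↔
      (↑g ∈ MulAction.fixedPoints (HO O J) (G ⧸ L))
    rw [mem_fixedPoints_iff_le_conjSub, mem_fixedPoints_iff_le_conjSub]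
    constructor
    · intro h
      refine le_trans (sInf_le ⟨?_, h⟩) le_rfl
      have hc := O.conj g hL
      rwa [Subgroup.map_top_of_surjective _ (MulAut.conj g).surjective] at hc
    · intro h
      exact le_trans hJle h
end

section
/- Let K and J be subgroups of G that are separated by 𝒪 (i.e., not inseparable), with J subconjugate to K. Then any subgroup of J is also separated from K by 𝒪. -/
/-!
If `g J g⁻¹ ≤ K`, then `g H_𝒪(J) g⁻¹ = H_𝒪(gJg⁻¹) ≤ H_𝒪(K)`. If moreover `c H_𝒪(J₀) c⁻¹ = H_𝒪(K)`
with `J₀ ≤ J`, then `H_𝒪(K) ≤ c H_𝒪(J) c⁻¹`. In a finite group a subgroup squeezed between two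
conjugates of the same subgroup equals both, so `H_𝒪(J)` and `H_𝒪(K)` are conjugate after all.
-/
section Conjugation

variable {G : Type*} [Group G]

lemma conjSub_eq_mapSubgroup (g : G) (K : Subgroup G) :
    conjSub g K = (MulAut.conj g).mapSubgroup K := rfl

lemma conjSub_mono (g : G) {A B : Subgroup G} (h : A ≤ B) : conjSub g A ≤ conjSub g B :=
  Subgroup.map_mono h

lemma conjSub_top (g : G) : conjSub g (⊤ : Subgroup G) = ⊤ :=
  Subgroup.map_top_of_surjective _ (MulEquiv.surjective _)

lemma conjSub_inv_eq_symm (g : G) (K : Subgroup G) :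
    conjSub g⁻¹ K = (MulAut.conj g).mapSubgroup.symm K := by
  rw [conjSub, map_inv]; rfl

lemma conjSub_inv_conjSub (g : G) (K : Subgroup G) : conjSub g⁻¹ (conjSub g K) = K :=
  (conjSub_inv_eq_symm g _).trans ((MulAut.conj g).mapSubgroup.symm_apply_apply K)

lemma card_conjSub (g : G) (K : Subgroup G) : Nat.card (conjSub g K) = Nat.card K :=
  Subgroup.card_mapSubgroup K (MulAut.conj g)

lemma eq_of_conjSub_le_of_le_conjSub [Finite G] {A B : Subgroup G} {g c : G}
    (hg : conjSub g A ≤ B) (hc : B ≤ conjSub c A) : conjSub g A = B :=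
  Subgroup.eq_of_le_of_card_ge hg <| by
    rw [card_conjSub]; exact (Subgroup.card_le_of_le hc).trans (card_conjSub c A).le

end Conjugation

namespace TransferSystem

variable {G : Type*} [Group G] (O : TransferSystem G)

lemma rel_conjSub_top (g : G) {H : Subgroup G} (h : O.rel H ⊤) : O.rel (conjSub g H) ⊤ :=
  conjSub_top g ▸ O.conj g h

lemma rel_conjSub_top_iff (g : G) (H : Subgroup G) : O.rel (conjSub g H) ⊤ ↔ O.rel H ⊤ :=
  ⟨fun h => conjSub_inv_conjSub g H ▸ O.rel_conjSub_top g⁻¹ h, O.rel_conjSub_top g⟩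

end TransferSystem

section HO

variable {G : Type*} [Group G] (O : TransferSystem G)

lemma HO_mono {A B : Subgroup G} (h : A ≤ B) : HO O A ≤ HO O B :=
  sInf_le_sInf fun _ ⟨hrel, hB⟩ => ⟨hrel, h.trans hB⟩

lemma HO_conjSub (g : G) (J : Subgroup G) : HO O (conjSub g J) = conjSub g (HO O J) := by
  rw [HO, HO, conjSub_eq_mapSubgroup, conjSub_eq_mapSubgroup, map_sInf,
    OrderIso.image_eq_preimage_symm]
  congr 1
  ext H
  rw [Set.mem_preimage, Set.mem_ofPred_eq, Set.mem_ofPred_eq, OrderIso.le_symm_apply,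
    ← conjSub_inv_eq_symm, O.rel_conjSub_top_iff]

end HO

/-- If `J` and `K` are separated by 𝒪 and `J` is subconjugate to `K`, then every subgroup of
`J` is also separated from `K`. -/
theorem separated_of_le_of_separated {G : Type*} [Group G] [Finite G] (O : TransferSystem G)
    (J K : Subgroup G) (hsep : ¬ TSInseparable O J K)
    (hsub : ∃ g : G, conjSub g J ≤ K) :
    ∀ J₀ : Subgroup G, J₀ ≤ J → ¬ TSInseparable O J₀ K := by
  rintro J₀ hJ₀ ⟨c, hc⟩
  obtain ⟨g, hg⟩ := hsub
  have hle : conjSub g (HO O J) ≤ HO O K := HO_conjSub O g J ▸ HO_mono O hg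
  have hge : HO O K ≤ conjSub c (HO O J) := hc ▸ conjSub_mono c (HO_mono O hJ₀)
  exact hsep ⟨g, eq_of_conjSub_le_of_le_conjSub hle hge⟩
end

section
/- Suppose G is abelian and L ≥ [H]^𝒪. Then the subposet of elements of [H]^𝒪 which transfer to L (under subgroup inclusion) has a maximum element, namely L ∩ H. -/
/-
In an abelian group the inseparability class of `H` is `{J | H_𝒪(J) = H}`. Since `H_𝒪` is monotone
and `H_𝒪(J) ≤ H` for every `J ≤ H`, the class is convex below `H`: a `K` in the class with `K ≤ L`
forces `L ⊓ H` into it. Restricting `H → G` along `L ≤ G` gives `L ⊓ H → L`, and every `J` in the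
class lies in `H_𝒪(J) = H`, so a `J` transferring to `L` lies in `L ⊓ H`.
-/

namespace TransferSystem

variable {G : Type*}

section Group

variable [Group G] (O : TransferSystem G)

lemma le_HO (J : Subgroup G) : J ≤ HO O J :=
  le_sInf fun _ hH => hH.2

lemma HO_mono {J K : Subgroup G} (h : J ≤ K) : HO O J ≤ HO O K :=
  sInf_le_sInf fun _ hH => ⟨hH.1, h.trans hH.2⟩

lemma HO_le {J H : Subgroup G} (hH : O.rel H ⊤) (hJH : J ≤ H) : HO O J ≤ H :=
  sInf_le ⟨hH, hJH⟩

lemma HO_eq_of_le_of_le {H J K : Subgroup G} (hH : O.rel H ⊤) (hK : HO O K = H) (hKJ : K ≤ J)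
    (hJH : J ≤ H) : HO O J = H :=
  le_antisymm (O.HO_le hH hJH) (hK ▸ O.HO_mono hKJ)

lemma rel_inf_of_rel_top {H : Subgroup G} (hH : O.rel H ⊤) (L : Subgroup G) : O.rel (L ⊓ H) L :=
  inf_comm H L ▸ O.restrict hH le_top

end Group

lemma conjSub_eq_self [CommGroup G] (g : G) (K : Subgroup G) : conjSub g K = K := by
  ext x
  simp [conjSub, MulAut.conj, mul_comm]

lemma inClass_iff_HO_eq [CommGroup G] (O : TransferSystem G) {H J : Subgroup G} :
    inClass O H J ↔ HO O J = H := by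
  simp only [inClass, conjSub_eq_self, exists_const]

end TransferSystem

open TransferSystem

theorem abelian_max_transferring_general {G : Type*} [CommGroup G] (O : TransferSystem G)
    {H L : Subgroup G} (hH : O.rel H ⊤)
    (habove : ∃ K : Subgroup G, inClass O H K ∧ K ≤ L) :
    inClass O H (L ⊓ H) ∧ O.rel (L ⊓ H) L ∧
      ∀ J : Subgroup G, inClass O H J → O.rel J L → J ≤ L ⊓ H := by
  simp only [inClass_iff_HO_eq] at habove ⊢
  obtain ⟨K, hK, hKL⟩ := habove
  have hKH : K ≤ H := hK ▸ O.le_HO K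
  refine ⟨O.HO_eq_of_le_of_le hH hK (le_inf hKL hKH) inf_le_right, O.rel_inf_of_rel_top hH L, ?_⟩
  intro J hJ hJL
  exact le_inf (O.le_of_rel hJL) (hJ ▸ O.le_HO J)

/-- For abelian `G`, if `L` is above the class of `H`, then the elements of the class which
transfer to `L` have a maximum element, namely `L ⊓ H`. -/
theorem abelian_max_transferring {G : Type*} [CommGroup G] [Finite G] (O : TransferSystem G)
    {H L : Subgroup G} (hH : O.rel H ⊤)
    (habove : ∃ K : Subgroup G, inClass O H K ∧ K ≤ L) :
    inClass O H (L ⊓ H) ∧ O.rel (L ⊓ H) L ∧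
      ∀ J : Subgroup G, inClass O H J → O.rel J L → J ≤ L ⊓ H :=
  abelian_max_transferring_general O hH habove
end

section
/- In the poset of transfer systems on a finite group G ordered by inclusion, for any transfer system 𝒪 the set of disk-like transfer systems contained in 𝒪 has a maximal element 𝒪^d, namely the transfer system generated by all transfers H → G in 𝒪; moreover two subgroups of G are inseparable for 𝒪 if and only if they are inseparable for 𝒪^d. -/
/-- 𝒪 is disk-like: it is generated by its transfers of the form `H → G`, i.e. it is contained
in every transfer system containing those transfers. -/
def DiskLike {G : Type*} [Group G] (O : TransferSystem G) : Prop :=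
  ∀ O' : TransferSystem G, (∀ H : Subgroup G, O.rel H ⊤ → O'.rel H ⊤) →
    ∀ K H : Subgroup G, O.rel K H → O'.rel K H

namespace TransferSystem

variable {G : Type*} [Group G]

/-- The conjunct `K ≤ H` makes this a transfer system without any hypothesis on `R`; it is
redundant when `R` is contained in `≤`. -/
def generate (R : Subgroup G → Subgroup G → Prop) : TransferSystem G where
  rel K H := K ≤ H ∧ ∀ O : TransferSystem G, (∀ {K H}, R K H → O.rel K H) → O.rel K H
  le_of_rel h := h.1
  refl H := ⟨le_rfl, fun O _ => O.refl H⟩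
  trans h₁ h₂ := ⟨h₁.1.trans h₂.1, fun O hO => O.trans (h₁.2 O hO) (h₂.2 O hO)⟩
  antisymm h₁ h₂ := le_antisymm h₁.1 h₂.1
  conj g _ _ h := ⟨Subgroup.map_mono h.1, fun O hO => O.conj g (h.2 O hO)⟩
  restrict h hL := ⟨inf_le_right, fun O hO => O.restrict (h.2 O hO) hL⟩

theorem rel_generate_of_rel {R : Subgroup G → Subgroup G → Prop} (hR : ∀ {K H}, R K H → K ≤ H)
    {K H : Subgroup G} (h : R K H) : (generate R).rel K H :=
  ⟨hR h, fun _ hO => hO h⟩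

theorem rel_of_rel_generate {R : Subgroup G → Subgroup G → Prop} {O : TransferSystem G}
    (hO : ∀ {K H}, R K H → O.rel K H) {K H : Subgroup G} (h : (generate R).rel K H) :
    O.rel K H :=
  h.2 O hO

/-- The paper's `𝒪ᵈ`. -/
def diskPart (O : TransferSystem G) : TransferSystem G :=
  generate fun K H => O.rel K H ∧ H = ⊤

variable {O : TransferSystem G}

theorem rel_of_rel_diskPart {K H : Subgroup G} (h : O.diskPart.rel K H) : O.rel K H :=
  rel_of_rel_generate And.left h

theorem diskPart_rel_top_iff {H : Subgroup G} : O.diskPart.rel H ⊤ ↔ O.rel H ⊤ :=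
  ⟨rel_of_rel_diskPart, fun h => rel_generate_of_rel (fun h => h.2 ▸ le_top) ⟨h, rfl⟩⟩

theorem diskLike_diskPart : DiskLike O.diskPart := by
  intro O' hO' K H h
  refine rel_of_rel_generate ?_ h
  rintro K _ ⟨hK, rfl⟩
  exact hO' K (diskPart_rel_top_iff.mpr hK)

theorem DiskLike.rel_diskPart {O' : TransferSystem G} (hO' : DiskLike O')
    (hle : ∀ K H, O'.rel K H → O.rel K H) {K H : Subgroup G} (h : O'.rel K H) :
    O.diskPart.rel K H :=
  hO' O.diskPart (fun H hH => diskPart_rel_top_iff.mpr (hle H ⊤ hH)) K H h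

theorem HO_eq_of_rel_top_iff {O' : TransferSystem G} (h : ∀ H, O.rel H ⊤ ↔ O'.rel H ⊤)
    (J : Subgroup G) : HO O J = HO O' J := by
  simp only [HO, h]

end TransferSystem

open TransferSystem in
theorem exists_max_diskLike_general {G : Type*} [Group G] (O : TransferSystem G) :
    ∃ Od : TransferSystem G, DiskLike Od ∧
      (∀ K H : Subgroup G, Od.rel K H → O.rel K H) ∧
      (∀ H : Subgroup G, O.rel H ⊤ → Od.rel H ⊤) ∧
      (∀ O' : TransferSystem G, DiskLike O' → (∀ K H : Subgroup G, O'.rel K H → O.rel K H) →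
        ∀ K H : Subgroup G, O'.rel K H → Od.rel K H) ∧
      (∀ J K : Subgroup G, TSInseparable O J K ↔ TSInseparable Od J K) := by
  have hHO : ∀ J, HO O J = HO O.diskPart J :=
    HO_eq_of_rel_top_iff fun _ => diskPart_rel_top_iff.symm
  refine ⟨O.diskPart, diskLike_diskPart, fun _ _ => rel_of_rel_diskPart,
    fun _ => diskPart_rel_top_iff.mpr, fun _ hO' hle _ _ => hO'.rel_diskPart hle, ?_⟩
  intro J K
  simp only [TSInseparable, hHO]

/-- For any transfer system 𝒪, the disk-like transfer systems contained in 𝒪 have a maximal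
element `𝒪ᵈ`, namely the one generated by all transfers `H → G` of 𝒪; moreover two subgroups
are 𝒪-inseparable iff they are `𝒪ᵈ`-inseparable. -/
theorem exists_max_diskLike {G : Type*} [Group G] [Finite G] (O : TransferSystem G) :
    ∃ Od : TransferSystem G, DiskLike Od ∧
      (∀ K H : Subgroup G, Od.rel K H → O.rel K H) ∧
      (∀ H : Subgroup G, O.rel H ⊤ → Od.rel H ⊤) ∧
      (∀ O' : TransferSystem G, DiskLike O' → (∀ K H : Subgroup G, O'.rel K H → O.rel K H) →
        ∀ K H : Subgroup G, O'.rel K H → Od.rel K H) ∧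
      (∀ J K : Subgroup G, TSInseparable O J K ↔ TSInseparable Od J K) :=
  exists_max_diskLike_general O
end
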